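/- arXiv:2503.02336 — 2 statements merged into one kernel-verified Lean document; each statement's English description precedes it below -/
import Mathlib

section
/- There exists a set of 12 points in the plane in general position with exactly 153 crossings. (The rectilinear crossing number 153 of the complete graph K₁₂ is attained.) -/
/-- The orientation determinant of the ordered triple of points `p, q, r ∈ ℝ²`. -/
def odet (p q r : ℝ × ℝ) : ℝ :=
  (q.1 - p.1) * (r.2 - p.2) - (q.2 - p.2) * (r.1 - p.1)

/-- A set of points in the plane is in general position if no three of its points are
collinear. -/
def GenPos (S : Set (ℝ × ℝ)) : Prop :=
  ∀ p ∈ S, ∀ q ∈ S, ∀ r ∈ S, p ≠ q → p ≠ r → q ≠ r → odet p q r ≠ 0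

/-- The number of crossings of a planar point set `S`: the number of unordered pairs
`{ {a,b}, {c,d} }` of disjoint two-element subsets of `S` such that the open segment
joining `a` and `b` intersects the open segment joining `c` and `d`. -/
noncomputable def cr (S : Set (ℝ × ℝ)) : ℕ :=
  Nat.card {x : Sym2 (Sym2 (ℝ × ℝ)) //
    ∃ a b c d : ℝ × ℝ, x = s(s(a, b), s(c, d)) ∧
      a ∈ S ∧ b ∈ S ∧ c ∈ S ∧ d ∈ S ∧ a ≠ b ∧ c ≠ d ∧
      ({a, b} : Set (ℝ × ℝ)) ∩ {c, d} = ∅ ∧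
      (openSegment ℝ a b ∩ openSegment ℝ c d).Nonempty}

/-!
Two open segments `ab`, `cd` spanned by four points in general position cross exactly when the
line through each segment strictly separates the endpoints of the other one, a sign condition on
orientation determinants. For points with integer coordinates these signs can be evaluated, so
for an explicit 12-point integer configuration both general position and the number of
crossings become finite computations; crossings are counted through the quadruples
`(i, j, k, l)` with `i < j`, `k < l`, `i < k`, which represent each crossing exactly once.
-/

open Function

section Orientation

variable {R : Type*} [CommRing R]

/-- `odet` over an arbitrary commutative ring, so that integer configurations can be evaluated. -/
def orient (p q r : R × R) : R :=
  (q.1 - p.1) * (r.2 - p.2) - (q.2 - p.2) * (r.1 - p.1)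

theorem odet_eq_orient : odet = orient := rfl

@[simp] theorem orient_self (p r : R × R) : orient p p r = 0 := by simp [orient]

@[simp] theorem orient_self_left (p q : R × R) : orient p q p = 0 := by simp [orient]

@[simp] theorem orient_self_right (p q : R × R) : orient p q q = 0 := by simp [orient]; ring

theorem orient_swap (p q r : R × R) : orient q p r = -orient p q r := by simp only [orient]; ring

theorem orient_convexComb (p q a b : R × R) (t : R) :
    orient p q ((1 - t) • a + t • b) = (1 - t) * orient p q a + t * orient p q b := by
  simp only [orient, Prod.fst_add, Prod.snd_add, Prod.smul_fst, Prod.smul_snd, smul_eq_mul]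
  ring

theorem orient_map {S : Type*} [CommRing S] (f : R →+* S) (p q r : R × R) :
    orient (Prod.map f f p) (Prod.map f f q) (Prod.map f f r) = f (orient p q r) := by
  simp [orient]

end Orientation

section Separation

variable {R : Type*} [CommRing R] [Preorder R]

/-- The line through `a` and `b` strictly separates `c` from `d`. -/
def LineSeparates (a b c d : R × R) : Prop :=
  orient a b c * orient a b d < 0

def Interlaced (a b c d : R × R) : Prop :=
  LineSeparates a b c d ∧ LineSeparates c d a b

instance [DecidableLT R] (a b c d : R × R) : Decidable (LineSeparates a b c d) :=
  inferInstanceAs (Decidable (_ < _))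

instance [DecidableLT R] (a b c d : R × R) : Decidable (Interlaced a b c d) :=
  inferInstanceAs (Decidable (_ ∧ _))

namespace LineSeparates

variable {a b c d : R × R}

theorem orient_left_ne_zero (h : LineSeparates a b c d) : orient a b c ≠ 0 := fun h0 => by
  simp [LineSeparates, h0] at h

theorem orient_right_ne_zero (h : LineSeparates a b c d) : orient a b d ≠ 0 := fun h0 => by
  simp [LineSeparates, h0] at h

theorem swap_line (h : LineSeparates a b c d) : LineSeparates b a c d := by
  rwa [LineSeparates, orient_swap a b c, orient_swap a b d, neg_mul_neg]

theorem swap_points (h : LineSeparates a b c d) : LineSeparates a b d c := by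
  rwa [LineSeparates, mul_comm]

theorem ne (h : LineSeparates a b c d) : a ≠ b ∧ a ≠ c ∧ a ≠ d ∧ b ≠ c ∧ b ≠ d := by
  have hc := h.orient_left_ne_zero
  have hd := h.orient_right_ne_zero
  refine ⟨?_, ?_, ?_, ?_, ?_⟩ <;> rintro rfl <;> simp_all

end LineSeparates

namespace Interlaced

variable {a b c d : R × R}

theorem symm (h : Interlaced a b c d) : Interlaced c d a b := ⟨h.2, h.1⟩

theorem swap_left (h : Interlaced a b c d) : Interlaced b a c d :=
  ⟨h.1.swap_line, h.2.swap_points⟩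

theorem swap_right (h : Interlaced a b c d) : Interlaced a b d c :=
  ⟨h.1.swap_points, h.2.swap_line⟩

theorem ne (h : Interlaced a b c d) : a ≠ b ∧ c ≠ d ∧ a ≠ c ∧ a ≠ d ∧ b ≠ c ∧ b ≠ d := by
  obtain ⟨hab, hac, had, hbc, hbd⟩ := h.1.ne
  exact ⟨hab, h.2.ne.1, hac, had, hbc, hbd⟩

end Interlaced

end Separation

section Transfer

variable {R S : Type*} [CommRing R] [LinearOrder R] [CommRing S] [Preorder S] {f : R →+* S}

theorem lineSeparates_map_iff (hf : StrictMono f) {a b c d : R × R} :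
    LineSeparates (Prod.map f f a) (Prod.map f f b) (Prod.map f f c) (Prod.map f f d) ↔
      LineSeparates a b c d := by
  rw [LineSeparates, LineSeparates, orient_map, orient_map, ← map_mul, ← map_zero f,
    hf.lt_iff_lt]

theorem interlaced_map_iff (hf : StrictMono f) {a b c d : R × R} :
    Interlaced (Prod.map f f a) (Prod.map f f b) (Prod.map f f c) (Prod.map f f d) ↔
      Interlaced a b c d := by
  simp only [Interlaced, lineSeparates_map_iff hf]

end Transfer

section Segments

variable {K : Type*} [Field K] [LinearOrder K] [IsStrictOrderedRing K]

theorem mul_neg_of_convexComb_eq_zero {x y s : K} (hx : x ≠ 0) (hs0 : 0 < s) (hs1 : s < 1)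
    (h : (1 - s) * x + s * y = 0) : x * y < 0 := by
  have key : s * (x * y) = -((1 - s) * (x * x)) := by linear_combination x * h
  have : 0 < (1 - s) * (x * x) := mul_pos (by linarith) (mul_self_pos.2 hx)
  exact neg_of_mul_neg_right (by linarith) hs0.le

theorem div_sub_mem_Ioo_of_mul_neg {x y : K} (h : x * y < 0) : x / (x - y) ∈ Set.Ioo 0 1 := by
  rcases mul_neg_iff.1 h with ⟨hx, hy⟩ | ⟨hx, hy⟩
  · have : 0 < x - y := by linarith
    exact ⟨div_pos hx this, (div_lt_one this).2 (by linarith)⟩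
  · have : x - y < 0 := by linarith
    exact ⟨div_pos_of_neg_of_neg hx this, (div_lt_one_of_neg this).2 (by linarith)⟩

variable {a b c d x : K × K}

theorem orient_eq_zero_of_mem_openSegment (hx : x ∈ openSegment K a b) : orient a b x = 0 := by
  rw [openSegment_eq_image] at hx
  obtain ⟨t, -, rfl⟩ := hx
  simp [orient_convexComb]

theorem lineSeparates_of_mem_openSegment (hx : x ∈ openSegment K c d) (hax : orient a b x = 0)
    (hc : orient a b c ≠ 0) : LineSeparates a b c d := by
  rw [openSegment_eq_image] at hx
  obtain ⟨s, ⟨hs0, hs1⟩, rfl⟩ := hx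
  rw [orient_convexComb] at hax
  exact mul_neg_of_convexComb_eq_zero hc hs0 hs1 hax

/-- The crossing point divides `ab` in the ratio `orient c d a : -orient c d b` and `cd` in the
ratio `orient a b c : -orient a b d`. -/
theorem Interlaced.openSegment_inter_nonempty (h : Interlaced a b c d) :
    (openSegment K a b ∩ openSegment K c d).Nonempty := by
  obtain ⟨ht0, ht1⟩ := div_sub_mem_Ioo_of_mul_neg h.2
  obtain ⟨hs0, hs1⟩ := div_sub_mem_Ioo_of_mul_neg h.1
  have hne {x y : K} (hxy : x * y < 0) : x - y ≠ 0 :=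
    sub_ne_zero.2 fun e => (mul_self_nonneg y).not_gt (e ▸ hxy)
  have he := hne h.2
  have hf := hne h.1
  set t := orient c d a / (orient c d a - orient c d b)
  set s := orient a b c / (orient a b c - orient a b d)
  have hmeet : (1 - t) • a + t • b = (1 - s) • c + s • d := by
    ext <;>
      simp only [Prod.fst_add, Prod.snd_add, Prod.smul_fst, Prod.smul_snd, smul_eq_mul, t, s] <;>
      field_simp <;> simp only [orient] <;> ring
  rw [openSegment_eq_image, openSegment_eq_image]
  exact ⟨_, ⟨t, ⟨ht0, ht1⟩, rfl⟩, ⟨s, ⟨hs0, hs1⟩, hmeet.symm⟩⟩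

theorem openSegment_inter_nonempty_iff_interlaced (hc : orient a b c ≠ 0)
    (ha : orient c d a ≠ 0) :
    (openSegment K a b ∩ openSegment K c d).Nonempty ↔ Interlaced a b c d := by
  refine ⟨fun ⟨x, hab, hcd⟩ => ⟨?_, ?_⟩, Interlaced.openSegment_inter_nonempty⟩
  · exact lineSeparates_of_mem_openSegment hcd (orient_eq_zero_of_mem_openSegment hab) hc
  · exact lineSeparates_of_mem_openSegment hab (orient_eq_zero_of_mem_openSegment hcd) ha

end Segments

section Crossings

theorem pair_inter_pair_eq_empty_iff {α : Type*} {a b c d : α} :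
    ({a, b} : Set α) ∩ {c, d} = ∅ ↔ a ≠ c ∧ a ≠ d ∧ b ≠ c ∧ b ≠ d := by
  simp only [← Set.disjoint_iff_inter_eq_empty, Set.disjoint_insert_left,
    Set.disjoint_singleton_left, Set.mem_insert_iff, Set.mem_singleton_iff]
  tauto

variable {S : Set (ℝ × ℝ)} {a b c d : ℝ × ℝ}

theorem genPos_range {ι : Type*} {p : ι → ℝ × ℝ}
    (h : ∀ i j k, i ≠ j → i ≠ k → j ≠ k → odet (p i) (p j) (p k) ≠ 0) :
    GenPos (Set.range p) := by
  rintro _ ⟨i, rfl⟩ _ ⟨j, rfl⟩ _ ⟨k, rfl⟩ hij hik hjk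
  exact h i j k (ne_of_apply_ne p hij) (ne_of_apply_ne p hik) (ne_of_apply_ne p hjk)

theorem GenPos.crossing_iff_interlaced (hS : GenPos S) (ha : a ∈ S) (hb : b ∈ S) (hc : c ∈ S)
    (hd : d ∈ S) :
    (a ≠ b ∧ c ≠ d ∧ ({a, b} : Set (ℝ × ℝ)) ∩ {c, d} = ∅ ∧
      (openSegment ℝ a b ∩ openSegment ℝ c d).Nonempty) ↔ Interlaced a b c d := by
  constructor
  · rintro ⟨hab, hcd, hdisj, hmeet⟩
    obtain ⟨hac, had, hbc, -⟩ := pair_inter_pair_eq_empty_iff.1 hdisj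
    exact (openSegment_inter_nonempty_iff_interlaced (hS a ha b hb c hc hab hac hbc)
      (hS c hc d hd a ha hcd hac.symm had.symm)).1 hmeet
  · intro h
    obtain ⟨hab, hcd, hac, had, hbc, hbd⟩ := h.ne
    exact ⟨hab, hcd, pair_inter_pair_eq_empty_iff.2 ⟨hac, had, hbc, hbd⟩,
      h.openSegment_inter_nonempty⟩

theorem GenPos.cr_eq_card_interlaced (hS : GenPos S) :
    cr S = Nat.card {x : Sym2 (Sym2 (ℝ × ℝ)) // ∃ a b c d : ℝ × ℝ, x = s(s(a, b), s(c, d)) ∧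
      a ∈ S ∧ b ∈ S ∧ c ∈ S ∧ d ∈ S ∧ Interlaced a b c d} := by
  refine Nat.card_congr (Equiv.subtypeEquivRight fun x => ?_)
  refine exists_congr fun a => exists_congr fun b => exists_congr fun c => exists_congr fun d => ?_
  constructor
  · rintro ⟨hx, ha, hb, hc, hd, hcross⟩
    exact ⟨hx, ha, hb, hc, hd, (hS.crossing_iff_interlaced ha hb hc hd).1 hcross⟩
  · rintro ⟨hx, ha, hb, hc, hd, h⟩
    exact ⟨hx, ha, hb, hc, hd, (hS.crossing_iff_interlaced ha hb hc hd).2 h⟩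

end Crossings

theorem Sym2.eq_and_eq_of_lt {α : Type*} [LinearOrder α] {a b c d : α} (hab : a < b)
    (hcd : c < d) (h : s(a, b) = s(c, d)) : a = c ∧ b = d := by
  have hinf := congrArg Sym2.inf h
  have hsup := congrArg Sym2.sup h
  simp only [Sym2.inf_mk, Sym2.sup_mk, inf_of_le_left hab.le, inf_of_le_left hcd.le,
    sup_of_le_right hab.le, sup_of_le_right hcd.le] at hinf hsup
  exact ⟨hinf, hsup⟩

section SortedCrossings

variable {ι : Type*} [LinearOrder ι]

theorem eq_of_sym2_sym2_eq {i j k l i' j' k' l' : ι} (hij : i < j) (hkl : k < l) (hik : i < k)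
    (hij' : i' < j') (hkl' : k' < l') (hik' : i' < k')
    (h : s(s(i, j), s(k, l)) = s(s(i', j'), s(k', l'))) : i = i' ∧ j = j' ∧ k = k' ∧ l = l' := by
  rcases Sym2.eq_iff.1 h with ⟨h₁, h₂⟩ | ⟨h₁, h₂⟩
  · obtain ⟨rfl, rfl⟩ := Sym2.eq_and_eq_of_lt hij hij' h₁
    obtain ⟨rfl, rfl⟩ := Sym2.eq_and_eq_of_lt hkl hkl' h₂
    exact ⟨rfl, rfl, rfl, rfl⟩
  · obtain ⟨rfl, -⟩ := Sym2.eq_and_eq_of_lt hij hkl' h₁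
    obtain ⟨rfl, -⟩ := Sym2.eq_and_eq_of_lt hkl hij' h₂
    exact absurd (hik.trans hik') (lt_irrefl i)

variable {R : Type*} [CommRing R] [Preorder R]

def IsSortedCrossing (p : ι → R × R) (t : ι × ι × ι × ι) : Prop :=
  t.1 < t.2.1 ∧ t.2.2.1 < t.2.2.2 ∧ t.1 < t.2.2.1 ∧
    Interlaced (p t.1) (p t.2.1) (p t.2.2.1) (p t.2.2.2)

instance [DecidableLT R] (p : ι → R × R) : DecidablePred (IsSortedCrossing p) := fun _ =>
  inferInstanceAs (Decidable (_ ∧ _ ∧ _ ∧ _))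

theorem exists_isSortedCrossing {p : ι → R × R} {i j k l : ι}
    (h : Interlaced (p i) (p j) (p k) (p l)) :
    ∃ t, IsSortedCrossing p t ∧
      s(s(p t.1, p t.2.1), s(p t.2.2.1, p t.2.2.2)) = s(s(p i, p j), s(p k, p l)) := by
  obtain ⟨hij, hkl, -⟩ := h.ne
  obtain ⟨a, b, hab, hsab, h⟩ :
      ∃ a b, a < b ∧ s(p a, p b) = s(p i, p j) ∧ Interlaced (p a) (p b) (p k) (p l) := by
    rcases lt_or_gt_of_ne (ne_of_apply_ne p hij) with hlt | hlt
    · exact ⟨i, j, hlt, rfl, h⟩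
    · exact ⟨j, i, hlt, Sym2.eq_swap, h.swap_left⟩
  obtain ⟨c, d, hcd, hscd, h⟩ :
      ∃ c d, c < d ∧ s(p c, p d) = s(p k, p l) ∧ Interlaced (p a) (p b) (p c) (p d) := by
    rcases lt_or_gt_of_ne (ne_of_apply_ne p hkl) with hlt | hlt
    · exact ⟨k, l, hlt, rfl, h⟩
    · exact ⟨l, k, hlt, Sym2.eq_swap, h.swap_right⟩
  rw [← hsab, ← hscd]
  rcases lt_or_gt_of_ne (ne_of_apply_ne p h.ne.2.2.1) with hac | hca
  · exact ⟨(a, b, c, d), ⟨hab, hcd, hac, h⟩, rfl⟩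
  · exact ⟨(c, d, a, b), ⟨hcd, hab, hca, h.symm⟩, Sym2.eq_swap⟩

theorem isSortedCrossing_map_iff {R' : Type*} [CommRing R'] [LinearOrder R'] {f : R' →+* R}
    (hf : StrictMono f) {p : ι → R' × R'} {t : ι × ι × ι × ι} :
    IsSortedCrossing (Prod.map f f ∘ p) t ↔ IsSortedCrossing p t := by
  simp only [IsSortedCrossing, comp_apply, interlaced_map_iff hf]

end SortedCrossings

theorem cr_range_eq_card {ι : Type*} [LinearOrder ι] {p : ι → ℝ × ℝ} (hp : Injective p)
    (hS : GenPos (Set.range p)) : cr (Set.range p) = Nat.card {t // IsSortedCrossing p t} := by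
  rw [hS.cr_eq_card_interlaced]
  refine (Nat.card_congr (Equiv.ofBijective
    (fun t => ⟨s(s(p t.1.1, p t.1.2.1), s(p t.1.2.2.1, p t.1.2.2.2)), _, _, _, _, rfl,
      Set.mem_range_self _, Set.mem_range_self _, Set.mem_range_self _, Set.mem_range_self _,
      t.2.2.2.2⟩) ⟨?_, ?_⟩)).symm
  · rintro ⟨⟨i, j, k, l⟩, hij, hkl, hik, _⟩ ⟨⟨i', j', k', l'⟩, hij', hkl', hik', _⟩ h
    have h' : Sym2.map (Sym2.map p) s(s(i, j), s(k, l)) =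
        Sym2.map (Sym2.map p) s(s(i', j'), s(k', l')) := congrArg Subtype.val h
    obtain ⟨rfl, rfl, rfl, rfl⟩ := eq_of_sym2_sym2_eq hij hkl hik hij' hkl' hik'
      (Sym2.map.injective (Sym2.map.injective hp) h')
    rfl
  · rintro ⟨x, a, b, c, d, rfl, ⟨i, rfl⟩, ⟨j, rfl⟩, ⟨k, rfl⟩, ⟨l, rfl⟩, h⟩
    obtain ⟨t, ht, heq⟩ := exists_isSortedCrossing h
    exact ⟨⟨t, ht⟩, Subtype.ext heq⟩

section IntegerPoints

variable {ι : Type*}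

def realPoints (q : ι → ℤ × ℤ) : ι → ℝ × ℝ :=
  Prod.map (Int.castRingHom ℝ) (Int.castRingHom ℝ) ∘ q

theorem realPoints_injective {q : ι → ℤ × ℤ} (hq : Injective q) : Injective (realPoints q) :=
  (Prod.map_injective.2 ⟨Int.cast_injective, Int.cast_injective⟩).comp hq

theorem genPos_range_realPoints {q : ι → ℤ × ℤ}
    (h : ∀ i j k, i ≠ j → i ≠ k → j ≠ k → orient (q i) (q j) (q k) ≠ 0) :
    GenPos (Set.range (realPoints q)) :=
  genPos_range fun i j k hij hik hjk => by
    rw [odet_eq_orient, realPoints, comp_apply, comp_apply, comp_apply, orient_map,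
      eq_intCast, Int.cast_ne_zero]
    exact h i j k hij hik hjk

theorem cr_range_realPoints [LinearOrder ι] {q : ι → ℤ × ℤ} (hq : Injective q)
    (h : ∀ i j k, i ≠ j → i ≠ k → j ≠ k → orient (q i) (q j) (q k) ≠ 0) :
    cr (Set.range (realPoints q)) = Nat.card {t // IsSortedCrossing q t} := by
  rw [cr_range_eq_card (realPoints_injective hq) (genPos_range_realPoints h)]
  exact Nat.card_congr
    (Equiv.subtypeEquivRight fun _ => isSortedCrossing_map_iff Int.cast_strictMono)

end IntegerPoints

def config12 : Fin 12 → ℤ × ℤ :=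
  ![(-12, 18), (35, 55), (23, -45), (10, -11), (29, 49), (15, -19), (17, 39), (-42, 32), (25, -51),
    (-7, 21), (16, 24), (-37, 30)]

theorem config12_injective : Injective config12 := by decide

theorem orient_config12_ne_zero : ∀ i j k : Fin 12, i ≠ j → i ≠ k → j ≠ k →
    orient (config12 i) (config12 j) (config12 k) ≠ 0 := by
  decide

set_option maxRecDepth 10000 in
theorem card_isSortedCrossing_config12 :
    Fintype.card {t // IsSortedCrossing config12 t} = 153 := by
  decide

/-- There exists a set of 12 points in the plane in general position with exactly 153
crossings. -/
theorem rectilinear_crossing_K12_attained :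
    ∃ S : Finset (ℝ × ℝ), S.card = 12 ∧ GenPos ↑S ∧ cr ↑S = 153 := by
  have hcoe : ((Finset.univ.image (realPoints config12) : Finset (ℝ × ℝ)) : Set (ℝ × ℝ)) =
      Set.range (realPoints config12) := by
    rw [Finset.coe_image, Finset.coe_univ, Set.image_univ]
  refine ⟨Finset.univ.image (realPoints config12), ?_, ?_, ?_⟩
  · rw [Finset.card_image_of_injective _ (realPoints_injective config12_injective),
      Finset.card_univ, Fintype.card_fin]
  · rw [hcoe]
    exact genPos_range_realPoints orient_config12_ne_zero
  · rw [hcoe, cr_range_realPoints config12_injective orient_config12_ne_zero,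
      Nat.card_eq_fintype_card, card_isSortedCrossing_config12]
end

section
/- Every set of 11 points in the plane in general position has an even number of crossings. -/
/-!
Order the plane lexicographically and let `triangleSign t ∈ ZMod 2` record whether the vertices
of the triangle `t`, listed in that order, turn clockwise. Four points in general position span
at most one crossing (their orientation determinants satisfy
`[abc] + [acd] = [abd] + [bcd]`), and they span one exactly when an even number of their four
sorted triangles turn clockwise. Hence, modulo 2,
`cr S = C(n, 4) + ∑_q ∑_{t ⊂ q} triangleSign t = C(n, 4) + (n - 3) ∑_t triangleSign t`,
as every triangle lies in `n - 3` quadruples. For `n = 11` both `C(11, 4) = 330` and `n - 3 = 8`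
are even.
-/

open Finset

lemma odet_rotate (p q r : ℝ × ℝ) : odet q r p = odet p q r := by
  unfold odet; ring

lemma odet_swap_left (p q r : ℝ × ℝ) : odet q p r = -odet p q r := by
  unfold odet; ring

lemma odet_swap_right (p q r : ℝ × ℝ) : odet p r q = -odet p q r := by
  unfold odet; ring

lemma odet_add_odet (a b c d : ℝ × ℝ) :
    odet a b c + odet a c d = odet a b d + odet b c d := by
  unfold odet; ring

/-- The linear dependence of four points of the plane in homogeneous coordinates. -/
lemma odet_smul_sub_eq_zero (a b c d : ℝ × ℝ) :
    odet b c d • a - odet a c d • b + odet a b d • c - odet a b c • d = 0 := by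
  ext <;> simp [odet] <;> ring

lemma odet_smul_add_smul (a b c d : ℝ × ℝ) {s t : ℝ} (h : s + t = 1) :
    odet a b (s • c + t • d) = s * odet a b c + t * odet a b d := by
  obtain rfl : s = 1 - t := by linarith
  simp only [odet, Prod.fst_add, Prod.snd_add, Prod.smul_fst, Prod.smul_snd, smul_eq_mul]
  ring

lemma odet_eq_zero_of_mem_openSegment {a b p : ℝ × ℝ} (hp : p ∈ openSegment ℝ a b) :
    odet a b p = 0 := by
  obtain ⟨s, t, -, -, hst, rfl⟩ := hp
  rw [odet_smul_add_smul a b a b hst]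
  simp only [odet]
  ring

lemma exists_pos_odet_eq_of_mem_openSegment (a b : ℝ × ℝ) {c d p : ℝ × ℝ}
    (hp : p ∈ openSegment ℝ c d) :
    ∃ s t : ℝ, 0 < s ∧ 0 < t ∧ odet a b p = s * odet a b c + t * odet a b d := by
  obtain ⟨s, t, hs, ht, hst, rfl⟩ := hp
  exact ⟨s, t, hs, ht, odet_smul_add_smul a b c d hst⟩

lemma mul_neg_of_pos_combination_eq_zero {s t x y : ℝ} (hs : 0 < s) (ht : 0 < t)
    (h : s * x + t * y = 0) (hx : x ≠ 0) : x * y < 0 := by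
  have : t * (x * y) = -(s * x ^ 2) := by linear_combination x * h
  nlinarith [(by positivity : 0 < x ^ 2)]

lemma mem_openSegment_of_mul_neg {E : Type*} [AddCommGroup E] [Module ℝ E] (a b : E) {x y : ℝ}
    (h : x * y < 0) : (x - y)⁻¹ • (x • b - y • a) ∈ openSegment ℝ a b := by
  have hpos : 0 < x / (x - y) ∧ 0 < -y / (x - y) := by
    rcases mul_neg_iff.1 h with ⟨hx, hy⟩ | ⟨hx, hy⟩
    · exact ⟨div_pos hx (by linarith), div_pos (by linarith) (by linarith)⟩
    · exact ⟨div_pos_of_neg_of_neg hx (by linarith),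
        div_pos_of_neg_of_neg (by linarith) (by linarith)⟩
  have hne : x - y ≠ 0 := by
    intro h0
    rw [h0, div_zero] at hpos
    exact lt_irrefl 0 hpos.1
  refine ⟨-y / (x - y), x / (x - y), hpos.2, hpos.1, by field_simp; ring, ?_⟩
  simp only [div_eq_inv_mul, mul_smul, smul_sub, neg_smul, smul_neg]
  abel

def Sym2.openSegment : Sym2 (ℝ × ℝ) → Set (ℝ × ℝ) :=
  Sym2.lift ⟨_root_.openSegment ℝ, openSegment_symm ℝ⟩

/-- `Crosses s(s(a, b), s(c, d))` unfolds to the last condition in the definition of `cr`. -/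
def Crosses : Sym2 (Sym2 (ℝ × ℝ)) → Prop :=
  Sym2.lift ⟨fun e f => (e.openSegment ∩ f.openSegment).Nonempty,
    fun _ _ => congrArg Set.Nonempty (Set.inter_comm _ _)⟩

theorem crosses_iff {a b c d : ℝ × ℝ} (hA : odet a b c ≠ 0) (hC : odet a c d ≠ 0) :
    Crosses s(s(a, b), s(c, d)) ↔
      odet a b c * odet a b d < 0 ∧ odet a c d * odet b c d < 0 := by
  constructor
  · rintro ⟨p, hab, hcd⟩
    obtain ⟨s, t, hs, ht, hp⟩ := exists_pos_odet_eq_of_mem_openSegment a b hcd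
    obtain ⟨u, v, hu, hv, hp'⟩ := exists_pos_odet_eq_of_mem_openSegment c d hab
    rw [odet_eq_zero_of_mem_openSegment hab] at hp
    rw [odet_eq_zero_of_mem_openSegment hcd, odet_rotate, odet_rotate b] at hp'
    exact ⟨mul_neg_of_pos_combination_eq_zero hs ht hp.symm hA,
      mul_neg_of_pos_combination_eq_zero hu hv hp'.symm hC⟩
  · rintro ⟨hAB, hCD⟩
    -- both sides are the intersection point of the lines `ab` and `cd`
    have hsame : (odet a c d - odet b c d)⁻¹ • (odet a c d • b - odet b c d • a) =
        (odet a b c - odet a b d)⁻¹ • (odet a b c • d - odet a b d • c) := by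
      have h1 := odet_add_odet a b c d
      have h2 := odet_smul_sub_eq_zero a b c d
      rw [show odet a b c - odet a b d = -(odet a c d - odet b c d) by linarith, inv_neg,
        neg_smul, ← smul_neg]
      congr 1
      rw [eq_comm, ← sub_eq_zero, ← h2]
      abel
    exact ⟨_, mem_openSegment_of_mul_neg a b hCD, hsame ▸ mem_openSegment_of_mul_neg c d hAB⟩

theorem crosses_acbd_iff {a b c d : ℝ × ℝ} (hA : odet a b c ≠ 0) (hB : odet a b d ≠ 0) :
    Crosses s(s(a, c), s(b, d)) ↔
      0 < odet a b c * odet a c d ∧ 0 < odet a b d * odet b c d := by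
  rw [crosses_iff (by rwa [odet_swap_right, neg_ne_zero]) hB, odet_swap_right a c b,
    odet_swap_left b c d]
  constructor <;> rintro ⟨h1, h2⟩ <;> constructor <;> linarith

theorem crosses_adbc_iff {a b c d : ℝ × ℝ} (hA : odet a b c ≠ 0) (hB : odet a b d ≠ 0) :
    Crosses s(s(a, d), s(b, c)) ↔
      odet a b d * odet a c d < 0 ∧ odet a b c * odet b c d < 0 := by
  rw [crosses_iff (by rwa [odet_swap_right, neg_ne_zero]) hA, odet_swap_right a d b,
    odet_swap_right a d c, ← odet_rotate d b c, neg_mul_neg]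

noncomputable def signBit (x : ℝ) : ZMod 2 := if x < 0 then 1 else 0

lemma pairing_signs_iff {A B C D : ℝ} (hA : A ≠ 0) (hB : B ≠ 0) (hC : C ≠ 0) (hD : D ≠ 0) :
    ((A * B < 0 ∧ C * D < 0) ∨ (0 < A * C ∧ 0 < B * D) ∨ (B * C < 0 ∧ A * D < 0)) ↔
      signBit A + signBit B + signBit C + signBit D = 0 := by
  rcases hA.lt_or_gt with hA | hA <;> rcases hB.lt_or_gt with hB | hB <;>
    rcases hC.lt_or_gt with hC | hC <;> rcases hD.lt_or_gt with hD | hD <;>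
    simp [signBit, mul_neg_iff, mul_pos_iff, hA, hB, hC, hD, hA.not_gt, hB.not_gt, hC.not_gt,
      hD.not_gt] <;>
    decide

lemma pairing_signs_unique {A B C D : ℝ} (h : A + C = B + D) (h1 : A * B < 0 ∧ C * D < 0) :
    ¬(0 < A * C ∧ 0 < B * D) ∧ ¬(B * C < 0 ∧ A * D < 0) := by
  rcases mul_neg_iff.1 h1.1 with ⟨hA, hB⟩ | ⟨hA, hB⟩ <;>
    rcases mul_neg_iff.1 h1.2 with ⟨hC, hD⟩ | ⟨hC, hD⟩ <;>
    simp only [mul_pos_iff, mul_neg_iff] <;>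
    constructor <;> rintro ⟨⟨_, _⟩ | ⟨_, _⟩, ⟨_, _⟩ | ⟨_, _⟩⟩ <;> linarith

theorem crosses_pairings_iff {a b c d : ℝ × ℝ} (hA : odet a b c ≠ 0) (hB : odet a b d ≠ 0)
    (hC : odet a c d ≠ 0) (hD : odet b c d ≠ 0) :
    (Crosses s(s(a, b), s(c, d)) ∨ Crosses s(s(a, c), s(b, d)) ∨ Crosses s(s(a, d), s(b, c))) ↔
      signBit (odet a b c) + signBit (odet a b d) + signBit (odet a c d) +
        signBit (odet b c d) = 0 := by
  rw [crosses_iff hA hC, crosses_acbd_iff hA hB, crosses_adbc_iff hA hB]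
  exact pairing_signs_iff hA hB hC hD

theorem not_crosses_of_crosses {a b c d : ℝ × ℝ} (hA : odet a b c ≠ 0) (hB : odet a b d ≠ 0)
    (hC : odet a c d ≠ 0) (h : Crosses s(s(a, b), s(c, d))) :
    ¬Crosses s(s(a, c), s(b, d)) ∧ ¬Crosses s(s(a, d), s(b, c)) := by
  rw [crosses_acbd_iff hA hB, crosses_adbc_iff hA hB]
  exact pairing_signs_unique (odet_add_odet a b c d) ((crosses_iff hA hC).1 h)

theorem eq_pairing_of_insert_eq {α : Type*} [DecidableEq α] {a b c d x y z w : α}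
    (hn : [x, y, z, w].Nodup) (h : ({x, y, z, w} : Finset α) = {a, b, c, d}) :
    s(s(x, y), s(z, w)) = s(s(a, b), s(c, d)) ∨ s(s(x, y), s(z, w)) = s(s(a, c), s(b, d)) ∨
      s(s(x, y), s(z, w)) = s(s(a, d), s(b, c)) := by
  have hmem : ∀ p ∈ ({x, y, z, w} : Finset α), p = a ∨ p = b ∨ p = c ∨ p = d := by
    intro p hp
    simpa [h] using hp
  rcases hmem x (by simp) with rfl | rfl | rfl | rfl <;>
    rcases hmem y (by simp) with rfl | rfl | rfl | rfl <;>
    rcases hmem z (by simp) with rfl | rfl | rfl | rfl <;>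
    rcases hmem w (by simp) with rfl | rfl | rfl | rfl <;>
    simp_all [Sym2.eq_swap]

def LexLE (p q : ℝ × ℝ) : Prop := toLex p ≤ toLex q

noncomputable instance : DecidableRel LexLE :=
  fun p q => inferInstanceAs (Decidable (toLex p ≤ toLex q))

instance : IsTrans (ℝ × ℝ) LexLE := ⟨fun _ _ _ => le_trans (α := Lex (ℝ × ℝ))⟩

instance : Std.Antisymm LexLE := ⟨fun _ _ h h' => toLex.injective (le_antisymm h h')⟩

instance : Std.Total LexLE := ⟨fun p q => le_total (toLex p) (toLex q)⟩

noncomputable def triangleSign (t : Finset (ℝ × ℝ)) : ZMod 2 :=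
  match t.sort LexLE with
  | [x, y, z] => signBit (odet x y z)
  | _ => 0

lemma triangleSign_eq {x y z : ℝ × ℝ} (hn : [x, y, z].Nodup) (hs : [x, y, z].Pairwise LexLE) :
    triangleSign {x, y, z} = signBit (odet x y z) := by
  have : ({x, y, z} : Finset (ℝ × ℝ)) = [x, y, z].toFinset := by simp
  rw [triangleSign, this, (List.toFinset_sort LexLE hn).2 hs]

noncomputable def quadSign (q : Finset (ℝ × ℝ)) : ZMod 2 :=
  ∑ x ∈ q, triangleSign (q.erase x)

lemma sum_erase_insert_four {α M : Type*} [DecidableEq α] [AddCommMonoid M] (f : Finset α → M)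
    {a b c d : α} (hn : [a, b, c, d].Nodup) :
    ∑ x ∈ {a, b, c, d}, f (({a, b, c, d} : Finset α).erase x) =
      f {b, c, d} + f {a, c, d} + f {a, b, d} + f {a, b, c} := by
  simp only [List.nodup_cons, List.mem_cons, List.not_mem_nil, not_or] at hn
  obtain ⟨⟨hab, hac, had, -⟩, ⟨hbc, hbd, -⟩, ⟨hcd, -⟩, -⟩ := hn
  rw [sum_insert (by simp [hab, hac, had]), sum_insert (by simp [hbc, hbd]),
    sum_insert (by simp [hcd]), sum_singleton]
  simp [erase_insert_of_ne, hab, hac, had, hbc, hbd, hcd, add_assoc]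

lemma exists_sorted_of_card_eq_four {q : Finset (ℝ × ℝ)} (hq : #q = 4) :
    ∃ a b c d, q = {a, b, c, d} ∧ [a, b, c, d].Nodup ∧ [a, b, c, d].Pairwise LexLE := by
  obtain ⟨a, b, c, d, hl⟩ := List.length_eq_four.1 ((q.length_sort LexLE).trans hq)
  refine ⟨a, b, c, d, ?_, hl ▸ q.sort_nodup LexLE, hl ▸ q.pairwise_sort LexLE⟩
  rw [← q.sort_toFinset LexLE, hl]
  simp

lemma quadSign_eq {a b c d : ℝ × ℝ} (hn : [a, b, c, d].Nodup)
    (hs : [a, b, c, d].Pairwise LexLE) :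
    quadSign {a, b, c, d} =
      signBit (odet a b c) + signBit (odet a b d) + signBit (odet a c d) +
        signBit (odet b c d) := by
  have hsub : ∀ {x y z : ℝ × ℝ}, [x, y, z].Sublist [a, b, c, d] →
      triangleSign {x, y, z} = signBit (odet x y z) :=
    fun h => triangleSign_eq (hn.sublist h) (hs.sublist h)
  rw [quadSign, sum_erase_insert_four _ hn, hsub (by simp), hsub (by simp), hsub (by simp),
    hsub (by simp)]
  ring

lemma GenPos.mono {S T : Set (ℝ × ℝ)} (h : GenPos S) (hTS : T ⊆ S) : GenPos T :=
  fun p hp q hq r hr => h p (hTS hp) q (hTS hq) r (hTS hr)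

lemma GenPos.odet_ne_zero_four {a b c d : ℝ × ℝ} (h : GenPos ↑({a, b, c, d} : Finset (ℝ × ℝ)))
    (hn : [a, b, c, d].Nodup) :
    odet a b c ≠ 0 ∧ odet a b d ≠ 0 ∧ odet a c d ≠ 0 ∧ odet b c d ≠ 0 := by
  simp only [List.nodup_cons, List.mem_cons, List.not_mem_nil, not_or] at hn
  obtain ⟨⟨hab, hac, had, -⟩, ⟨hbc, hbd, -⟩, ⟨hcd, -⟩, -⟩ := hn
  refine ⟨h _ ?_ _ ?_ _ ?_ hab hac hbc, h _ ?_ _ ?_ _ ?_ hab had hbd,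
    h _ ?_ _ ?_ _ ?_ hac had hcd, h _ ?_ _ ?_ _ ?_ hbc hbd hcd⟩ <;> simp

theorem quadSign_eq_zero_iff {q : Finset (ℝ × ℝ)} (hq : #q = 4) (hgp : GenPos ↑q) :
    quadSign q = 0 ↔
      ∃ x y z w, [x, y, z, w].Nodup ∧ q = {x, y, z, w} ∧ Crosses s(s(x, y), s(z, w)) := by
  obtain ⟨a, b, c, d, rfl, hn, hs⟩ := exists_sorted_of_card_eq_four hq
  obtain ⟨hA, hB, hC, hD⟩ := hgp.odet_ne_zero_four hn
  rw [quadSign_eq hn hs, ← crosses_pairings_iff hA hB hC hD]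
  constructor
  · have hperm : [a, c, b, d].Nodup ∧ [a, d, b, c].Nodup := by
      simp only [List.nodup_cons, List.mem_cons, List.not_mem_nil, not_or] at hn ⊢
      tauto
    rintro (h | h | h)
    · exact ⟨a, b, c, d, hn, rfl, h⟩
    · exact ⟨a, c, b, d, hperm.1, by ext; simp; tauto, h⟩
    · exact ⟨a, d, b, c, hperm.2, by ext; simp; tauto, h⟩
  · rintro ⟨x, y, z, w, hn', hq', h⟩
    rcases eq_pairing_of_insert_eq hn' hq'.symm with he | he | he <;> rw [he] at h <;>
      simp only [h, true_or, or_true]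

theorem crossing_eq_of_insert_eq {a b c d x y z w : ℝ × ℝ}
    (hgp : GenPos ↑({a, b, c, d} : Finset (ℝ × ℝ))) (hn : [a, b, c, d].Nodup)
    (hn' : [x, y, z, w].Nodup) (h : ({x, y, z, w} : Finset (ℝ × ℝ)) = {a, b, c, d})
    (hc : Crosses s(s(a, b), s(c, d))) (hc' : Crosses s(s(x, y), s(z, w))) :
    s(s(x, y), s(z, w)) = s(s(a, b), s(c, d)) := by
  obtain ⟨hA, hB, hC, -⟩ := hgp.odet_ne_zero_four hn
  have hnot := not_crosses_of_crosses hA hB hC hc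
  rcases eq_pairing_of_insert_eq hn' h with he | he | he
  · exact he
  · exact absurd (he ▸ hc') hnot.1
  · exact absurd (he ▸ hc') hnot.2

lemma nodup_iff_ne_ne_inter_eq_empty {α : Type*} {a b c d : α} :
    [a, b, c, d].Nodup ↔ a ≠ b ∧ c ≠ d ∧ ({a, b} : Set α) ∩ {c, d} = ∅ := by
  simp [← Set.disjoint_iff_inter_eq_empty, Set.disjoint_insert_right]
  tauto

lemma card_insert_four_of_nodup {α : Type*} [DecidableEq α] {a b c d : α}
    (hn : [a, b, c, d].Nodup) : #({a, b, c, d} : Finset α) = 4 := by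
  simpa using List.toFinset_card_of_nodup hn

def Sym2.support {α : Type*} [DecidableEq α] (x : Sym2 (Sym2 α)) : Finset α :=
  x.toFinset.biUnion Sym2.toFinset

lemma Sym2.support_mk {α : Type*} [DecidableEq α] (a b c d : α) :
    Sym2.support s(s(a, b), s(c, d)) = {a, b, c, d} := by
  ext
  simp [Sym2.support, Sym2.toFinset_mk_eq]
  tauto

theorem cr_eq_card_quadSign_eq_zero {S : Finset (ℝ × ℝ)} (hgp : GenPos ↑S) :
    cr ↑S = #{q ∈ S.powersetCard 4 | quadSign q = 0} := by
  rw [cr, ← Nat.card_eq_finsetCard]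
  refine Nat.card_eq_of_bijective (fun x => ⟨x.1.support, ?_⟩) ⟨?_, ?_⟩
  · obtain ⟨a, b, c, d, hx, ha, hb, hc, hd, hab, hcd, hdisj, hcr⟩ := x.2
    have hn := nodup_iff_ne_ne_inter_eq_empty.2 ⟨hab, hcd, hdisj⟩
    have hsub : ({a, b, c, d} : Finset (ℝ × ℝ)) ⊆ S := by
      simp_all [insert_subset_iff]
    rw [hx, Sym2.support_mk, mem_filter, mem_powersetCard,
      quadSign_eq_zero_iff (card_insert_four_of_nodup hn) (hgp.mono (coe_subset.2 hsub))]
    exact ⟨⟨hsub, card_insert_four_of_nodup hn⟩, a, b, c, d, hn, rfl, hcr⟩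
  · rintro ⟨x, a, b, c, d, rfl, ha, hb, hc, hd, hab, hcd, hdisj, hcr⟩
      ⟨x', a', b', c', d', rfl, ha', hb', hc', hd', hab', hcd', hdisj', hcr'⟩ heq
    simp only [Subtype.mk.injEq, Sym2.support_mk] at heq
    have hsub : ({a', b', c', d'} : Finset (ℝ × ℝ)) ⊆ S := by
      simp_all [insert_subset_iff]
    exact Subtype.ext (crossing_eq_of_insert_eq (hgp.mono (coe_subset.2 hsub))
      (nodup_iff_ne_ne_inter_eq_empty.2 ⟨hab', hcd', hdisj'⟩)
      (nodup_iff_ne_ne_inter_eq_empty.2 ⟨hab, hcd, hdisj⟩) heq hcr' hcr)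
  · rintro ⟨q, hq⟩
    obtain ⟨⟨hqS, hq4⟩, hq0⟩ := mem_filter.1 hq |>.imp_left mem_powersetCard.1
    obtain ⟨a, b, c, d, hn, rfl, hcr⟩ :=
      (quadSign_eq_zero_iff hq4 (hgp.mono (coe_subset.2 hqS))).1 hq0
    obtain ⟨hab, hcd, hdisj⟩ := nodup_iff_ne_ne_inter_eq_empty.1 hn
    refine ⟨⟨s(s(a, b), s(c, d)), a, b, c, d, rfl, ?_, ?_, ?_, ?_, hab, hcd, hdisj, hcr⟩,
      Subtype.ext (Sym2.support_mk a b c d)⟩ <;>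
      simp_all [insert_subset_iff]

theorem sum_powersetCard_sum_erase {α M : Type*} [DecidableEq α] [AddCommMonoid M]
    (S : Finset α) (k : ℕ) (f : Finset α → M) :
    ∑ q ∈ S.powersetCard (k + 1), ∑ x ∈ q, f (q.erase x) =
      (#S - k) • ∑ t ∈ S.powersetCard k, f t := by
  have hcount : ∀ t ∈ S.powersetCard k, (#S - k) • f t = ∑ _y ∈ S \ t, f t := by
    intro t ht
    obtain ⟨htS, htk⟩ := mem_powersetCard.1 ht
    rw [sum_const, card_sdiff_of_subset htS, htk]
  rw [smul_sum, sum_congr rfl hcount, sum_sigma', sum_sigma']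
  refine sum_bij' (fun p _ => ⟨p.1.erase p.2, p.2⟩) (fun p _ => ⟨insert p.2 p.1, p.2⟩)
    ?_ ?_ ?_ ?_ (fun _ _ => rfl)
  · rintro ⟨q, x⟩ h
    simp only [mem_sigma, mem_powersetCard] at h ⊢
    obtain ⟨⟨hqS, hqk⟩, hx⟩ := h
    refine ⟨⟨(erase_subset x q).trans hqS, by rw [card_erase_of_mem hx, hqk]; rfl⟩, ?_⟩
    exact mem_sdiff.2 ⟨hqS hx, notMem_erase x q⟩
  · rintro ⟨t, y⟩ h
    simp only [mem_sigma, mem_powersetCard, mem_sdiff] at h ⊢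
    obtain ⟨⟨htS, htk⟩, hyS, hyt⟩ := h
    exact ⟨⟨insert_subset hyS htS, by rw [card_insert_of_notMem hyt, htk]⟩, mem_insert_self y t⟩
  · rintro ⟨q, x⟩ h
    simp only [mem_sigma] at h
    simp [insert_erase h.2]
  · rintro ⟨t, y⟩ h
    simp only [mem_sigma, mem_sdiff] at h
    simp [erase_insert h.2.2]

lemma natCast_card_filter_eq_zero {ι : Type*} (s : Finset ι) (f : ι → ZMod 2) :
    (#{i ∈ s | f i = 0} : ZMod 2) = #s + ∑ i ∈ s, f i := by
  rw [card_filter, card_eq_sum_ones, Nat.cast_sum, Nat.cast_sum, ← sum_add_distrib]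
  refine sum_congr rfl fun i _ => ?_
  generalize f i = z
  revert z
  decide

theorem natCast_cr_eq {S : Finset (ℝ × ℝ)} (hgp : GenPos ↑S) :
    (cr ↑S : ZMod 2) =
      (#S).choose 4 + (#S - 3) • ∑ t ∈ S.powersetCard 3, triangleSign t := by
  rw [cr_eq_card_quadSign_eq_zero hgp, natCast_card_filter_eq_zero, card_powersetCard]
  exact congrArg _ (sum_powersetCard_sum_erase S 3 triangleSign)

theorem natCast_cr_eq_choose_of_odd {S : Finset (ℝ × ℝ)} (hgp : GenPos ↑S) (hodd : Odd #S) :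
    (cr ↑S : ZMod 2) = (#S).choose 4 := by
  rw [natCast_cr_eq hgp, nsmul_eq_mul,
    ZMod.natCast_eq_zero_iff_even.2 (Nat.Odd.sub_odd hodd (by decide)), zero_mul, add_zero]

/-- Every set of 11 points in the plane in general position has an even number of
crossings. -/
theorem even_crossings_eleven_points (S : Finset (ℝ × ℝ)) (hcard : S.card = 11)
    (hgp : GenPos ↑S) :
    Even (cr ↑S) := by
  have h := natCast_cr_eq_choose_of_odd hgp (by rw [hcard]; decide)
  rw [hcard] at h
  rw [← ZMod.natCast_eq_zero_iff_even, h]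
  decide
end
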